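/- Let Σ be a finite alphabet and T : {1,…,n} → Σ a text of length n. Define r_f(T) = ∏_{i=1}^{n} c_{≥i}(T[i])/(n − i + 1), where c_{≥i}(T[i]) is the number of indices j with i ≤ j ≤ n and T[j] = T[i]. Then for every permutation π of {1,…,n}, r_f(T ∘ π) = r_f(T); i.e., the size of the file compressed by forward-looking adaptive arithmetic coding is invariant under permutations of the original input. -/

import Mathlib

/-!
Grouping the positions by symbol, the numerators `c_{≥i}(T i)` over the positions carrying a
symbol `a` run through `k, k - 1, …, 1`, where `k` is the number of occurrences of `a`. Hence
the product of all numerators is `∏ₐ kₐ!`, which depends only on the symbol counts, and these a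
permutation of the positions preserves. The denominators do not involve the text at all.
-/

open Finset

open scoped Nat

section

variable {ι α : Type*}

theorem card_filter_comp_perm_eq [Fintype ι] [DecidableEq α] (T : ι → α) (π : Equiv.Perm ι)
    (a : α) : #{j | T (π j) = a} = #{j | T j = a} := by
  simp only [card_filter]
  exact Equiv.sum_comp π fun j => if T j = a then 1 else 0

variable [LinearOrder ι]

theorem prod_card_filter_le_eq_factorial (s : Finset ι) :
    ∏ i ∈ s, #{j ∈ s | i ≤ j} = (#s)! := by
  induction s using Finset.induction_on_min with
  | empty => simp
  | insert a s ha ih =>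
    have ha_notMem : a ∉ s := fun h => lt_irrefl a (ha a h)
    have h_min : {j ∈ insert a s | a ≤ j} = insert a s :=
      filter_true_of_mem fun j hj => (mem_insert.1 hj).elim ge_of_eq fun hj => (ha j hj).le
    have h_rest : ∀ i ∈ s, #{j ∈ insert a s | i ≤ j} = #{j ∈ s | i ≤ j} := fun i hi => by
      rw [filter_insert, if_neg (not_le.2 (ha i hi))]
    rw [prod_insert ha_notMem, h_min, prod_congr rfl h_rest, ih, card_insert_of_notMem ha_notMem,
      Nat.factorial_succ]

variable [Fintype ι] [DecidableEq α]

theorem prod_card_filter_le_and_eq_eq_prod_factorial (T : ι → α) :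
    ∏ i, #{j | i ≤ j ∧ T j = T i} = ∏ a ∈ univ.image T, (#{j | T j = a})! := by
  rw [← prod_fiberwise_of_maps_to (g := T) (t := univ.image T)
    fun i _ => mem_image_of_mem T (mem_univ i)]
  refine prod_congr rfl fun a _ => ?_
  rw [← prod_card_filter_le_eq_factorial]
  refine prod_congr rfl fun i hi => congrArg card ?_
  ext j
  simp [(mem_filter.1 hi).2, and_comm]

theorem prod_card_filter_le_and_eq_comp_perm (T : ι → α) (π : Equiv.Perm ι) :
    ∏ i, #{j | i ≤ j ∧ (T ∘ π) j = (T ∘ π) i} = ∏ i, #{j | i ≤ j ∧ T j = T i} := by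
  have h_image : univ.image (T ∘ π) = univ.image T := by
    rw [image_comp, image_univ_equiv]
  rw [prod_card_filter_le_and_eq_eq_prod_factorial (T ∘ π), h_image,
    prod_card_filter_le_and_eq_eq_prod_factorial T]
  simp only [Function.comp_apply, card_filter_comp_perm_eq]

end

theorem forward_adaptive_range_perm_invariant_general
    {α : Type*} [DecidableEq α] {n : ℕ}
    (T : Fin n → α) (π : Equiv.Perm (Fin n)) :
    (∏ i : Fin n,
        ((univ.filter (fun j => i ≤ j ∧ (T ∘ π) j = (T ∘ π) i)).card : ℚ) /
          ((n - (i : ℕ) : ℕ) : ℚ)) =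
      ∏ i : Fin n,
        ((univ.filter (fun j => i ≤ j ∧ T j = T i)).card : ℚ) /
          ((n - (i : ℕ) : ℕ) : ℚ) := by
  rw [prod_div_distrib, prod_div_distrib]
  congr 1
  exact_mod_cast prod_card_filter_le_and_eq_comp_perm T π

/-- The final range of forward-looking adaptive arithmetic coding,
`r_f(T) = ∏_{i=1}^n c_{≥i}(T i)/(n − i + 1)`, is invariant under permutations
of the input text; hence the compressed size `-log₂ r_f(T)` is permutation
invariant. -/
theorem forward_adaptive_range_perm_invariant
    {α : Type*} [Fintype α] [DecidableEq α] {n : ℕ}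
    (T : Fin n → α) (π : Equiv.Perm (Fin n)) :
    (∏ i : Fin n,
        ((univ.filter (fun j => i ≤ j ∧ (T ∘ π) j = (T ∘ π) i)).card : ℚ) /
          ((n - (i : ℕ) : ℕ) : ℚ)) =
      ∏ i : Fin n,
        ((univ.filter (fun j => i ≤ j ∧ T j = T i)).card : ℚ) /
          ((n - (i : ℕ) : ℕ) : ℚ) :=
  forward_adaptive_range_perm_invariant_general T π
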